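/- Existence of event points at gap distance: let (f,g) be a nucleus point of M (g = M^* f and f = M_* g) and let (c₀,d₀) ∈ C × D with λ := M(c₀,d₀) − f(c₀) − g(d₀) > 0. Then there exists a nucleus point (f',g') of M with M(c₀,d₀) − f'(c₀) − g'(d₀) = 0 (so (c₀,d₀) is a witness pair for (f',g')) such that max( osc(f − f'), osc(g − g') ) = λ. -/

import Mathlib

/-- Isbell upper transform: `(M^* f)(d) = min_{c} (M c d - f c)`. -/
noncomputable def isbellStar {C D : Type*} [Fintype C] [Nonempty C]
    (M : C → D → ℝ) (f : C → ℝ) : D → ℝ :=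
  fun d => Finset.univ.inf' Finset.univ_nonempty (fun c => M c d - f c)

/-- Isbell lower transform: `(M_* g)(c) = min_{d} (M c d - g d)`. -/
noncomputable def isbellLow {C D : Type*} [Fintype D] [Nonempty D]
    (M : C → D → ℝ) (g : D → ℝ) : C → ℝ :=
  fun c => Finset.univ.inf' Finset.univ_nonempty (fun d => M c d - g d)

/-- Oscillation (max-spread) of a function on a nonempty finite type. -/
noncomputable def osc {C : Type*} [Fintype C] [Nonempty C] (h : C → ℝ) : ℝ :=
  Finset.univ.sup' Finset.univ_nonempty h - Finset.univ.inf' Finset.univ_nonempty h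

/-! Raise `f` at `c₀` by the gap `λ`, to the largest value `M c₀ d₀ - g d₀` compatible with
`g d₀`; call the result `fl` and close up: `g' = M^* fl`, `f' = M_* g'`. Since
`M^* ∘ M_* ∘ M^* = M^*`, the pair `(f', g')` is a nucleus point. Each Isbell transform turns a
difference with values in `[a, b]` into one with values in `[a, b]`, so `g - g'` and `f' - f`
take values in `[0, λ]`. The raised value is tight at `(c₀, d₀)`, hence `g' d₀ = g d₀` and
`f' c₀ = f c₀ + λ`, while at a `d₁` realising `f c₀ = M c₀ d₁ - g d₁` the new `g'` drops by
the full `λ`. -/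

open Function Set

theorem update_add_sub_mem_Icc {ι : Type*} [DecidableEq ι] (f : ι → ℝ) (i : ι) {t : ℝ}
    (ht : 0 ≤ t) (j : ι) : update f i (f i + t) j - f j ∈ Icc 0 t := by
  rcases eq_or_ne j i with rfl | hj
  · simp [ht]
  · simp [hj, ht]

section Oscillation

variable {ι : Type*} [Fintype ι] [Nonempty ι] {h : ι → ℝ} {a b : ℝ}

theorem osc_le_of_forall_mem_Icc (hab : ∀ i, h i ∈ Icc a b) : osc h ≤ b - a := by
  have hsup : Finset.univ.sup' Finset.univ_nonempty h ≤ b :=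
    Finset.sup'_le _ _ fun i _ => (hab i).2
  have hinf : a ≤ Finset.univ.inf' Finset.univ_nonempty h :=
    Finset.le_inf' _ _ fun i _ => (hab i).1
  unfold osc
  linarith

theorem osc_eq_of_forall_mem_Icc (hab : ∀ i, h i ∈ Icc a b) {i j : ι} (hi : h i = a)
    (hj : h j = b) : osc h = b - a := by
  have hsup : Finset.univ.sup' Finset.univ_nonempty h = b :=
    le_antisymm (Finset.sup'_le _ _ fun i _ => (hab i).2)
      (hj ▸ Finset.le_sup' h (Finset.mem_univ j))
  have hinf : Finset.univ.inf' Finset.univ_nonempty h = a :=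
    le_antisymm (hi ▸ Finset.inf'_le h (Finset.mem_univ i))
      (Finset.le_inf' _ _ fun i _ => (hab i).1)
  rw [osc, hsup, hinf]

end Oscillation

section Isbell

variable {C D : Type*} (M : C → D → ℝ)

theorem isbellStar_le [Fintype C] [Nonempty C] (f : C → ℝ) (c : C) (d : D) :
    isbellStar M f d ≤ M c d - f c :=
  Finset.inf'_le _ (Finset.mem_univ c)

theorem isbellLow_le [Fintype D] [Nonempty D] (g : D → ℝ) (c : C) (d : D) :
    isbellLow M g c ≤ M c d - g d :=
  Finset.inf'_le _ (Finset.mem_univ d)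

theorem exists_isbellLow_eq [Fintype D] [Nonempty D] (g : D → ℝ) (c : C) :
    ∃ d, isbellLow M g c = M c d - g d := by
  obtain ⟨d, -, hd⟩ := Finset.exists_mem_eq_inf' Finset.univ_nonempty (fun d => M c d - g d)
  exact ⟨d, hd⟩

theorem le_isbellStar_iff [Fintype C] [Nonempty C] {f : C → ℝ} {g : D → ℝ} :
    g ≤ isbellStar M f ↔ ∀ c d, f c + g d ≤ M c d := by
  simp only [Pi.le_def, isbellStar, Finset.le_inf'_iff, Finset.mem_univ, forall_const,
    le_sub_iff_add_le']
  exact forall_comm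

theorem le_isbellLow_iff [Fintype D] [Nonempty D] {f : C → ℝ} {g : D → ℝ} :
    f ≤ isbellLow M g ↔ ∀ c d, f c + g d ≤ M c d := by
  simp only [Pi.le_def, isbellLow, Finset.le_inf'_iff, Finset.mem_univ, forall_const,
    le_sub_iff_add_le]

theorem isbellStar_antitone [Fintype C] [Nonempty C] : Antitone (isbellStar M) :=
  fun _ _ hf d => Finset.le_inf' _ _ fun c _ =>
    (isbellStar_le M _ c d).trans (by linarith [hf c])

theorem isbellStar_sub_isbellStar_mem_Icc [Fintype C] [Nonempty C] {f₁ f₂ : C → ℝ} {a b : ℝ}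
    (h : ∀ c, f₂ c - f₁ c ∈ Icc a b) (d : D) :
    isbellStar M f₁ d - isbellStar M f₂ d ∈ Icc a b := by
  have hlo : isbellStar M f₂ d + a ≤ isbellStar M f₁ d :=
    Finset.le_inf' _ _ fun c _ => by linarith [isbellStar_le M f₂ c d, (h c).1]
  have hhi : isbellStar M f₁ d - b ≤ isbellStar M f₂ d :=
    Finset.le_inf' _ _ fun c _ => by linarith [isbellStar_le M f₁ c d, (h c).2]
  constructor <;> linarith

theorem isbellLow_sub_isbellLow_mem_Icc [Fintype D] [Nonempty D] {g₁ g₂ : D → ℝ} {a b : ℝ}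
    (h : ∀ d, g₂ d - g₁ d ∈ Icc a b) (c : C) :
    isbellLow M g₁ c - isbellLow M g₂ c ∈ Icc a b := by
  have hlo : isbellLow M g₂ c + a ≤ isbellLow M g₁ c :=
    Finset.le_inf' _ _ fun d _ => by linarith [isbellLow_le M g₂ c d, (h d).1]
  have hhi : isbellLow M g₁ c - b ≤ isbellLow M g₂ c :=
    Finset.le_inf' _ _ fun d _ => by linarith [isbellLow_le M g₁ c d, (h d).2]
  constructor <;> linarith

theorem le_isbellLow_isbellStar [Fintype C] [Nonempty C] [Fintype D] [Nonempty D] (f : C → ℝ) :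
    f ≤ isbellLow M (isbellStar M f) :=
  (le_isbellLow_iff M).2 <| (le_isbellStar_iff M).1 le_rfl

theorem isbellStar_isbellLow_isbellStar [Fintype C] [Nonempty C] [Fintype D] [Nonempty D]
    (f : C → ℝ) : isbellStar M (isbellLow M (isbellStar M f)) = isbellStar M f :=
  le_antisymm (isbellStar_antitone M (le_isbellLow_isbellStar M f))
    ((le_isbellStar_iff M).2 <| (le_isbellLow_iff M).1 le_rfl)

theorem isbellStar_update_apply_self [Fintype C] [Nonempty C] [DecidableEq C] {f : C → ℝ}
    {g : D → ℝ} (hg : g = isbellStar M f) {c₀ : C} {d₀ : D} {v : ℝ}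
    (hv : v = M c₀ d₀ - g d₀) :
    isbellStar M (update f c₀ v) d₀ = g d₀ := by
  refine le_antisymm (by simpa [hv] using isbellStar_le M (update f c₀ v) c₀ d₀)
    (Finset.le_inf' _ _ fun c _ => ?_)
  rcases eq_or_ne c c₀ with rfl | hc
  · simp [hv]
  · simpa [hc, hg] using isbellStar_le M f c d₀

end Isbell

theorem exists_event_point_general {C D : Type*} [Fintype C] [Nonempty C]
    [Fintype D] [Nonempty D] (M : C → D → ℝ) (f : C → ℝ) (g : D → ℝ)
    (hg : g = isbellStar M f) (hf : f = isbellLow M g)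
    (c₀ : C) (d₀ : D) :
    ∃ f' : C → ℝ, ∃ g' : D → ℝ,
      g' = isbellStar M f' ∧ f' = isbellLow M g' ∧
      M c₀ d₀ - f' c₀ - g' d₀ = 0 ∧
      max (osc (fun c => f c - f' c)) (osc (fun d => g d - g' d))
        = M c₀ d₀ - f c₀ - g d₀ := by
  classical
  set lam := M c₀ d₀ - f c₀ - g d₀
  have hlam : 0 ≤ lam := by linarith [hg ▸ isbellStar_le M f c₀ d₀]
  set fl := update f c₀ (f c₀ + lam)
  set g' := isbellStar M fl
  set f' := isbellLow M g'
  have hg' : ∀ d, g d - g' d ∈ Icc 0 lam := fun d => by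
    simpa only [← hg] using
      isbellStar_sub_isbellStar_mem_Icc M (update_add_sub_mem_Icc f c₀ hlam) d
  have hf' : ∀ c, f' c - f c ∈ Icc 0 lam := fun c => by
    simpa only [← hf] using isbellLow_sub_isbellLow_mem_Icc M hg' c
  have hg'd₀ : g' d₀ = g d₀ := isbellStar_update_apply_self M hg (by ring)
  have hf'c₀ : f' c₀ = f c₀ + lam :=
    le_antisymm (by linarith [(hf' c₀).2])
      (by simpa [fl] using le_isbellLow_isbellStar M fl c₀)
  obtain ⟨d₁, hd₁⟩ := exists_isbellLow_eq M g c₀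
  have hg'd₁ : g' d₁ ≤ M c₀ d₁ - (f c₀ + lam) := by
    simpa [fl] using isbellStar_le M fl c₀ d₁
  refine ⟨f', g', (isbellStar_isbellLow_isbellStar M fl).symm, rfl,
    by rw [hf'c₀, hg'd₀]; ring, ?_⟩
  have hosc_f : osc (fun c => f c - f' c) ≤ 0 - -lam :=
    osc_le_of_forall_mem_Icc fun c => ⟨by linarith [(hf' c).2], by linarith [(hf' c).1]⟩
  have hosc_g : osc (fun d => g d - g' d) = lam - 0 :=
    osc_eq_of_forall_mem_Icc hg' (i := d₀) (by simp [hg'd₀]) (j := d₁)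
      (by linarith [(hg' d₁).2, hf ▸ hd₁])
  rw [hosc_g, max_eq_right (by linarith), sub_zero]

/-- Existence of event points at gap distance: if `(f,g)` is a nucleus point
with positive gap `λ` at `(c₀,d₀)`, there is a nucleus point `(f',g')` at
distance exactly `λ` for which `(c₀,d₀)` is a witness pair. -/
theorem exists_event_point {C D : Type*} [Fintype C] [Nonempty C]
    [Fintype D] [Nonempty D] (M : C → D → ℝ) (f : C → ℝ) (g : D → ℝ)
    (hg : g = isbellStar M f) (hf : f = isbellLow M g)
    (c₀ : C) (d₀ : D) (hpos : 0 < M c₀ d₀ - f c₀ - g d₀) :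
    ∃ f' : C → ℝ, ∃ g' : D → ℝ,
      g' = isbellStar M f' ∧ f' = isbellLow M g' ∧
      M c₀ d₀ - f' c₀ - g' d₀ = 0 ∧
      max (osc (fun c => f c - f' c)) (osc (fun d => g d - g' d))
        = M c₀ d₀ - f c₀ - g d₀ :=
  exists_event_point_general M f g hg hf c₀ d₀
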